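/- If a = (a₀,a₁,a₂) and b = (b₀,b₁,b₂) are real triples with A(a)·A(b) = 0, A(a) ≠ 0, and A(b) ≠ 0, then C(a) = 0 and C(b) = 0, where C(x) = x₀³ + x₁³ + x₂³ - 3x₀x₁x₂. -/
import Mathlib


theorem circulant_zero_prod_cubic_vanishes (a₀ a₁ a₂ b₀ b₁ b₂ : ℝ)
    (hab : (!![a₀, a₁, a₂; a₂, a₀, a₁; a₁, a₂, a₀] : Matrix (Fin 3) (Fin 3) ℝ) *
      !![b₀, b₁, b₂; b₂, b₀, b₁; b₁, b₂, b₀] = 0)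
    (ha : (!![a₀, a₁, a₂; a₂, a₀, a₁; a₁, a₂, a₀] : Matrix (Fin 3) (Fin 3) ℝ) ≠ 0)
    (hb : (!![b₀, b₁, b₂; b₂, b₀, b₁; b₁, b₂, b₀] : Matrix (Fin 3) (Fin 3) ℝ) ≠ 0) :
    a₀^3 + a₁^3 + a₂^3 - 3*a₀*a₁*a₂ = 0 ∧ b₀^3 + b₁^3 + b₂^3 - 3*b₀*b₁*b₂ = 0 := by
  set A : Matrix (Fin 3) (Fin 3) ℝ := !![a₀, a₁, a₂; a₂, a₀, a₁; a₁, a₂, a₀] with hA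
  set B : Matrix (Fin 3) (Fin 3) ℝ := !![b₀, b₁, b₂; b₂, b₀, b₁; b₁, b₂, b₀] with hB
  have hdA : A.det = a₀^3 + a₁^3 + a₂^3 - 3*a₀*a₁*a₂ := by
    rw [hA, Matrix.det_fin_three]; simp [Matrix.cons_val_one]; ring
  have hdB : B.det = b₀^3 + b₁^3 + b₂^3 - 3*b₀*b₁*b₂ := by
    rw [hB, Matrix.det_fin_three]; simp [Matrix.cons_val_one]; ring
  have hA0 : A.det = 0 := by
    by_contra h
    have hu : IsUnit A.det := isUnit_iff_ne_zero.mpr h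
    have : B = A⁻¹ * (A * B) := by
      rw [← Matrix.mul_assoc, Matrix.nonsing_inv_mul A hu, Matrix.one_mul]
    rw [hab, Matrix.mul_zero] at this
    exact hb this
  have hB0 : B.det = 0 := by
    by_contra h
    have hu : IsUnit B.det := isUnit_iff_ne_zero.mpr h
    have : A = (A * B) * B⁻¹ := by
      rw [Matrix.mul_assoc, Matrix.mul_nonsing_inv B hu, Matrix.mul_one]
    rw [hab, Matrix.zero_mul] at this
    exact ha this
  exact ⟨hdA ▸ hA0, hdB ▸ hB0⟩
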